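/- arXiv:1903.00120 — 7 statements merged into one kernel-verified Lean document; each statement's English description precedes it below -/
import Mathlib

section
/- Let t0 < t1 be real numbers and let p : ℝ → ℝ be twice continuously differentiable on [t0, t1], with speed v = p' and acceleration u = p''. Suppose v(t) > 0 for all t ∈ [t0, t1] and u_min ≤ u(t) ≤ u_max for all t ∈ [t0, t1]. Then v(t1)² ≥ v(t0)² + 2·u_min·(p(t1) − p(t0)) and v(t1)² ≤ v(t0)² + 2·u_max·(p(t1) − p(t0)); equivalently (since speeds are positive), sqrt(2·u_min·(p(t1)−p(t0)) + v(t0)²) ≤ v(t1) ≤ sqrt(2·u_max·(p(t1)−p(t0)) + v(t0)²). -/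
private lemma mono_aux {a b : ℝ} {f f' : ℝ → ℝ}
    (hf : ∀ t ∈ Set.Icc a b, HasDerivAt f (f' t) t)
    (h0 : ∀ t ∈ Set.Icc a b, 0 ≤ f' t) : MonotoneOn f (Set.Icc a b) := by
  apply monotoneOn_of_deriv_nonneg (convex_Icc a b)
  · exact fun t ht => (hf t ht).continuousAt.continuousWithinAt
  · intro t ht
    exact (hf t (interior_subset ht)).differentiableAt.differentiableWithinAt
  · intro t ht
    rw [(hf t (interior_subset ht)).deriv]
    exact h0 t (interior_subset ht)

/-- Proposition 2: bounds on the final speed of a double-integrator vehicle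
traversing a zone, given the initial state and the traversed distance. -/
theorem speed_bounds_double_integrator
    (t0 t1 : ℝ) (h01 : t0 < t1)
    (p v u : ℝ → ℝ) (u_min u_max : ℝ)
    (hp : ∀ t ∈ Set.Icc t0 t1, HasDerivAt p (v t) t)
    (hv : ∀ t ∈ Set.Icc t0 t1, HasDerivAt v (u t) t)
    (hu_cont : ContinuousOn u (Set.Icc t0 t1))
    (hv_pos : ∀ t ∈ Set.Icc t0 t1, 0 < v t)
    (hu_lb : ∀ t ∈ Set.Icc t0 t1, u_min ≤ u t)
    (hu_ub : ∀ t ∈ Set.Icc t0 t1, u t ≤ u_max) :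
    (v t0 ^ 2 + 2 * u_min * (p t1 - p t0) ≤ v t1 ^ 2 ∧
      v t1 ^ 2 ≤ v t0 ^ 2 + 2 * u_max * (p t1 - p t0)) ∧
    (Real.sqrt (2 * u_min * (p t1 - p t0) + v t0 ^ 2) ≤ v t1 ∧
      v t1 ≤ Real.sqrt (2 * u_max * (p t1 - p t0) + v t0 ^ 2)) := by
  have ht0 : t0 ∈ Set.Icc t0 t1 := Set.left_mem_Icc.2 h01.le
  have ht1 : t1 ∈ Set.Icc t0 t1 := Set.right_mem_Icc.2 h01.le
  have hlow : v t0 ^ 2 + 2 * u_min * (p t1 - p t0) ≤ v t1 ^ 2 := by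
    have hmono : MonotoneOn (fun t => v t ^ 2 - 2 * u_min * p t) (Set.Icc t0 t1) := by
      apply mono_aux (f' := fun t => 2 * v t * (u t - u_min))
      · intro t ht
        have : HasDerivAt (fun t => v t ^ 2 - 2 * u_min * p t)
            ((2 : ℕ) * v t ^ 1 * u t - 2 * u_min * v t) t :=
          ((hv t ht).pow 2).sub ((hp t ht).const_mul (2 * u_min))
        convert this using 1; push_cast; ring
      · intro t ht
        have := hv_pos t ht
        have := hu_lb t ht
        nlinarith
    have := hmono ht0 ht1 h01.le
    simp only at this
    linarith
  have hhigh : v t1 ^ 2 ≤ v t0 ^ 2 + 2 * u_max * (p t1 - p t0) := by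
    have hmono : MonotoneOn (fun t => 2 * u_max * p t - v t ^ 2) (Set.Icc t0 t1) := by
      apply mono_aux (f' := fun t => 2 * v t * (u_max - u t))
      · intro t ht
        have : HasDerivAt (fun t => 2 * u_max * p t - v t ^ 2)
            (2 * u_max * v t - (2 : ℕ) * v t ^ 1 * u t) t :=
          ((hp t ht).const_mul (2 * u_max)).sub ((hv t ht).pow 2)
        convert this using 1; push_cast; ring
      · intro t ht
        have := hv_pos t ht
        have := hu_ub t ht
        nlinarith
    have := hmono ht0 ht1 h01.le
    simp only at this
    linarith
  have hv1 : 0 < v t1 := hv_pos t1 ht1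
  refine ⟨⟨hlow, hhigh⟩, ?_, ?_⟩
  · have : Real.sqrt (2 * u_min * (p t1 - p t0) + v t0 ^ 2) ≤ Real.sqrt (v t1 ^ 2) :=
      Real.sqrt_le_sqrt (by linarith)
    rwa [Real.sqrt_sq hv1.le] at this
  · have : Real.sqrt (v t1 ^ 2) ≤ Real.sqrt (2 * u_max * (p t1 - p t0) + v t0 ^ 2) :=
      Real.sqrt_le_sqrt (by linarith)
    rwa [Real.sqrt_sq hv1.le] at this
end

section
/- Let a > 0, L > 0, and v_s, v_e > 0 be real numbers such that |v_e² − v_s²| < 2aL and v_s² + v_e² ≥ 2aL. Define v_c = sqrt((v_s² + v_e² + 2aL)/2) and v_c' = sqrt((v_s² + v_e² − 2aL)/2). Then (2·v_c − v_s − v_e)/a < (v_s + v_e − 2·v_c')/a, i.e., the travel time of the accelerate-then-decelerate bang-bang profile is strictly smaller than that of the decelerate-then-accelerate profile. -/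
/-- Theorem 1: the accelerate-then-decelerate bang-bang profile has strictly
smaller travel time than the decelerate-then-accelerate profile. -/
theorem accel_decel_faster
    (a L v_s v_e : ℝ) (ha : 0 < a) (hL : 0 < L)
    (hvs : 0 < v_s) (hve : 0 < v_e)
    (h1 : |v_e ^ 2 - v_s ^ 2| < 2 * a * L)
    (h2 : 2 * a * L ≤ v_s ^ 2 + v_e ^ 2) :
    (2 * Real.sqrt ((v_s ^ 2 + v_e ^ 2 + 2 * a * L) / 2) - v_s - v_e) / a <
      (v_s + v_e - 2 * Real.sqrt ((v_s ^ 2 + v_e ^ 2 - 2 * a * L) / 2)) / a := by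
  set S := v_s ^ 2 + v_e ^ 2 with hS
  set D := 2 * a * L with hD
  have hD0 : 0 < D := by positivity
  have hp : (0:ℝ) ≤ (S + D) / 2 := by nlinarith
  have hm : (0:ℝ) ≤ (S - D) / 2 := by nlinarith
  set x := Real.sqrt ((S + D) / 2) with hx
  set y := Real.sqrt ((S - D) / 2) with hy
  have hx0 : 0 ≤ x := Real.sqrt_nonneg _
  have hy0 : 0 ≤ y := Real.sqrt_nonneg _
  have hx2 : x ^ 2 = (S + D) / 2 := Real.sq_sqrt hp
  have hy2 : y ^ 2 = (S - D) / 2 := Real.sq_sqrt hm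
  -- key: x*y < v_s * v_e
  have hxy : x * y < v_s * v_e := by
    have h1' : (v_e ^ 2 - v_s ^ 2) ^ 2 < D ^ 2 := by
      have := abs_nonneg (v_e ^ 2 - v_s ^ 2)
      nlinarith [sq_abs (v_e ^ 2 - v_s ^ 2)]
    have hsq : (x * y) ^ 2 < (v_s * v_e) ^ 2 := by
      have : (x * y) ^ 2 = x ^ 2 * y ^ 2 := by ring
      rw [this, hx2, hy2]
      nlinarith
    nlinarith [mul_nonneg hx0 hy0, mul_pos hvs hve]
  have hsum : x + y < v_s + v_e := by
    have hsq : (x + y) ^ 2 < (v_s + v_e) ^ 2 := by nlinarith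
    nlinarith [add_nonneg hx0 hy0, add_pos hvs hve]
  have : 2 * x - v_s - v_e < v_s + v_e - 2 * y := by linarith
  exact div_lt_div_of_pos_right this ha
end

section
/- Let a > 0, L > 0, and v_s, v_e > 0 be real numbers with v_s² + v_e² ≥ 2aL. Then |v_e² − v_s²| < 2aL if and only if sqrt((v_s² + v_e² − 2aL)/2) + sqrt((v_s² + v_e² + 2aL)/2) < v_s + v_e. -/
/-- The key equivalence in the proof of Theorem 1: the switching-point
existence condition is equivalent to the sum of the two switching speeds
being smaller than v_s + v_e. -/
theorem switching_condition_iff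
    (a L v_s v_e : ℝ) (ha : 0 < a) (hL : 0 < L)
    (hvs : 0 < v_s) (hve : 0 < v_e)
    (h2 : 2 * a * L ≤ v_s ^ 2 + v_e ^ 2) :
    |v_e ^ 2 - v_s ^ 2| < 2 * a * L ↔
      Real.sqrt ((v_s ^ 2 + v_e ^ 2 - 2 * a * L) / 2) +
        Real.sqrt ((v_s ^ 2 + v_e ^ 2 + 2 * a * L) / 2) < v_s + v_e := by
  set A := (v_s ^ 2 + v_e ^ 2 - 2 * a * L) / 2 with hAdef
  set B := (v_s ^ 2 + v_e ^ 2 + 2 * a * L) / 2 with hBdef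
  have hA : 0 ≤ A := by simp only [hAdef]; linarith
  have hB : 0 ≤ B := by simp only [hBdef]; nlinarith [sq_nonneg v_s, sq_nonneg v_e]
  have hS1 : Real.sqrt A ^ 2 = A := Real.sq_sqrt hA
  have hS2 : Real.sqrt B ^ 2 = B := Real.sq_sqrt hB
  have hn1 := Real.sqrt_nonneg A
  have hn2 := Real.sqrt_nonneg B
  have key : Real.sqrt A + Real.sqrt B < v_s + v_e ↔
      Real.sqrt A * Real.sqrt B < v_s * v_e := by
    constructor <;> intro h
    · nlinarith [hS1, hS2, hn1, hn2]
    · nlinarith [hS1, hS2, hn1, hn2]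
  rw [key, ← Real.sqrt_mul hA,
    Real.sqrt_lt' (by positivity : (0:ℝ) < v_s * v_e), abs_lt]
  constructor
  · rintro ⟨h1, h2'⟩
    rw [hAdef, hBdef]
    nlinarith
  · intro h
    rw [hAdef, hBdef] at h
    constructor <;> nlinarith [mul_pos ha hL, sq_nonneg (v_e ^ 2 - v_s ^ 2), sq_nonneg (v_e ^ 2 + v_s ^ 2)]
end

section
/- Let u_max > 0 > u_min and let p_s, p_e, v_s, v_e be real numbers with v_s ≥ 0 and v_e ≥ 0. Define p_c = (v_e² − v_s² + 2(u_max·p_s − u_min·p_e)) / (2(u_max − u_min)), assume v_s² + 2·u_max·(p_c − p_s) ≥ 0, and define v_c = sqrt(v_s² + 2·u_max·(p_c − p_s)). Then (p_c, v_c) solves the switching-point system: v_c² − v_s² = 2·u_max·(p_c − p_s) and v_e² − v_c² = 2·u_min·(p_e − p_c). -/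
/-- Lemma 2: the intermediate (switching) state of the accelerate-then-decelerate
time-optimal trajectory solves the switching-point system. -/
theorem switching_state_solves_system
    (u_max u_min p_s p_e v_s v_e : ℝ)
    (hmax : 0 < u_max) (hmin : u_min < 0)
    (hvs : 0 ≤ v_s) (hve : 0 ≤ v_e)
    (p_c : ℝ)
    (hpc : p_c = (v_e ^ 2 - v_s ^ 2 + 2 * (u_max * p_s - u_min * p_e)) /
      (2 * (u_max - u_min)))
    (hnonneg : 0 ≤ v_s ^ 2 + 2 * u_max * (p_c - p_s))
    (v_c : ℝ)
    (hvc : v_c = Real.sqrt (v_s ^ 2 + 2 * u_max * (p_c - p_s))) :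
    v_c ^ 2 - v_s ^ 2 = 2 * u_max * (p_c - p_s) ∧
      v_e ^ 2 - v_c ^ 2 = 2 * u_min * (p_e - p_c) := by
  have hsq : v_c ^ 2 = v_s ^ 2 + 2 * u_max * (p_c - p_s) := by
    rw [hvc, Real.sq_sqrt hnonneg]
  have hd : u_max - u_min ≠ 0 := by linarith
  constructor
  · linarith
  · rw [hsq]
    field_simp at hpc
    nlinarith [hpc]
end

section
/- Let a > 0, L > 0, T > 0, and v_s, v_e ≥ 0 be real numbers. Suppose v : ℝ → ℝ is Lipschitz with constant a on [0, T] (i.e., |v(t) − v(s)| ≤ a·|t − s| for all s, t ∈ [0, T]), v(0) = v_s, v(T) = v_e, and ∫₀ᵀ v(t) dt = L. Then T ≥ (2·sqrt((v_s² + v_e² + 2aL)/2) − v_s − v_e) / a. -/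
set_option maxHeartbeats 1000000

/-- Minimum-time lower bound: no speed profile with acceleration bounded in
magnitude by `a` can traverse a zone of length `L` from speed `v_s` to speed
`v_e` faster than the single-switch bang-bang profile. -/
theorem min_time_lower_bound
    (a L T v_s v_e : ℝ) (ha : 0 < a) (hL : 0 < L) (hT : 0 < T)
    (hvs : 0 ≤ v_s) (hve : 0 ≤ v_e)
    (v : ℝ → ℝ)
    (hlip : ∀ s ∈ Set.Icc (0 : ℝ) T, ∀ t ∈ Set.Icc (0 : ℝ) T,
      |v t - v s| ≤ a * |t - s|)
    (h0 : v 0 = v_s) (hTe : v T = v_e)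
    (hint : ∫ t in (0 : ℝ)..T, v t = L) :
    (2 * Real.sqrt ((v_s ^ 2 + v_e ^ 2 + 2 * a * L) / 2) - v_s - v_e) / a ≤ T := by
  have hmem0 : (0:ℝ) ∈ Set.Icc (0:ℝ) T := ⟨le_refl _, hT.le⟩
  have hmemT : T ∈ Set.Icc (0:ℝ) T := ⟨hT.le, le_refl _⟩
  -- |v_e - v_s| ≤ a * T
  have hST : |v_e - v_s| ≤ a * T := by
    have := hlip 0 hmem0 T hmemT
    rw [h0, hTe] at this
    simpa [abs_of_nonneg hT.le] using this
  set c : ℝ := (v_e - v_s + a * T) / (2 * a) with hc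
  have hc0 : 0 ≤ c := by
    have h1 : v_s - v_e ≤ a * T := by
      have := neg_abs_le (v_e - v_s); linarith [hST]
    have : 0 ≤ v_e - v_s + a * T := by linarith
    positivity
  have hcT : c ≤ T := by
    have h1 : v_e - v_s ≤ a * T := le_trans (le_abs_self _) hST
    rw [hc, div_le_iff₀ (by positivity)]
    nlinarith
  -- continuity of v on [0,T]
  have hcont : ContinuousOn v (Set.Icc 0 T) := by
    apply LipschitzOnWith.continuousOn (K := Real.toNNReal a)
    rw [lipschitzOnWith_iff_dist_le_mul]
    intro x hx y hy
    rw [Real.dist_eq, Real.dist_eq]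
    simpa [Real.coe_toNNReal a ha.le] using hlip y hy x hx
  have hsub1 : Set.Icc (0:ℝ) c ⊆ Set.Icc 0 T := Set.Icc_subset_Icc le_rfl hcT
  have hsub2 : Set.Icc c T ⊆ Set.Icc 0 T := Set.Icc_subset_Icc hc0 le_rfl
  have hi1 : IntervalIntegrable v MeasureTheory.volume 0 c :=
    ContinuousOn.intervalIntegrable_of_Icc hc0 (hcont.mono hsub1)
  have hi2 : IntervalIntegrable v MeasureTheory.volume c T :=
    ContinuousOn.intervalIntegrable_of_Icc hcT (hcont.mono hsub2)
  -- bounds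
  have hb1 : ∫ t in (0:ℝ)..c, v t ≤ ∫ t in (0:ℝ)..c, (v_s + a * t) := by
    apply intervalIntegral.integral_mono_on hc0 hi1
      (Continuous.intervalIntegrable (by continuity) _ _)
    intro t ht
    have ht' := hsub1 ht
    have := hlip 0 hmem0 t ht'
    rw [h0] at this
    have h2 := le_trans (le_abs_self _) this
    have : a * |t - 0| = a * t := by rw [sub_zero, abs_of_nonneg ht.1]
    linarith [h2.trans_eq this]
  have hb2 : ∫ t in c..T, v t ≤ ∫ t in c..T, (v_e + a * (T - t)) := by
    apply intervalIntegral.integral_mono_on hcT hi2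
      (Continuous.intervalIntegrable (by continuity) _ _)
    intro t ht
    have ht' := hsub2 ht
    have := hlip T hmemT t ht'
    rw [hTe] at this
    have h2 := le_trans (le_abs_self _) this
    have h3 : a * |t - T| = a * (T - t) := by
      rw [abs_of_nonpos (by linarith [ht.2]), neg_sub]
    linarith [h2.trans_eq h3]
  -- compute the polynomial integrals
  have hI1 : ∫ t in (0:ℝ)..c, (v_s + a * t) = v_s * c + a * (c ^ 2 / 2) := by
    rw [intervalIntegral.integral_add intervalIntegrable_const
      (Continuous.intervalIntegrable (by continuity) _ _),
      intervalIntegral.integral_const_mul, integral_id]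
    simp; ring
  have hI2 : ∫ t in c..T, (v_e + a * (T - t))
      = (v_e + a * T) * (T - c) - a * ((T ^ 2 - c ^ 2) / 2) := by
    have : ∀ t : ℝ, v_e + a * (T - t) = (v_e + a * T) + (-a) * t := by
      intro t; ring
    simp_rw [this]
    rw [intervalIntegral.integral_add intervalIntegrable_const
      (Continuous.intervalIntegrable (by continuity) _ _),
      intervalIntegral.integral_const_mul, integral_id]
    simp; ring
  -- combine
  have hsplit : (∫ t in (0:ℝ)..c, v t) + ∫ t in c..T, v t = L := by
    rw [intervalIntegral.integral_add_adjacent_intervals hi1 hi2, hint]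
  have hLle : L ≤ v_s * c + a * (c ^ 2 / 2)
      + ((v_e + a * T) * (T - c) - a * ((T ^ 2 - c ^ 2) / 2)) := by
    rw [← hsplit, ← hI1, ← hI2]; exact add_le_add hb1 hb2
  -- the key quadratic inequality
  set vc : ℝ := (v_s + v_e + a * T) / 2 with hvc
  have hkey : (v_s ^ 2 + v_e ^ 2 + 2 * a * L) / 2 ≤ vc ^ 2 := by
    have hc2 : 2 * a * c = v_e - v_s + a * T := by
      rw [hc]; field_simp
    have hL2 : 2 * a * L ≤ 2 * a * (v_s * c + a * (c ^ 2 / 2)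
        + ((v_e + a * T) * (T - c) - a * ((T ^ 2 - c ^ 2) / 2))) :=
      mul_le_mul_of_nonneg_left hLle (by positivity)
    have hexp : 2 * a * (v_s * c + a * (c ^ 2 / 2)
        + ((v_e + a * T) * (T - c) - a * ((T ^ 2 - c ^ 2) / 2)))
        = v_s * (2 * a * c) - (v_e + a * T) * (2 * a * c) + (2 * a * c) ^ 2 / 2
          + 2 * a * T * v_e + a ^ 2 * T ^ 2 := by ring
    rw [hexp, hc2] at hL2
    rw [hvc]
    nlinarith [hL2]
  have hvc0 : 0 ≤ vc := by rw [hvc]; positivity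
  have hsq : Real.sqrt ((v_s ^ 2 + v_e ^ 2 + 2 * a * L) / 2) ≤ vc := by
    calc Real.sqrt ((v_s ^ 2 + v_e ^ 2 + 2 * a * L) / 2)
        ≤ Real.sqrt (vc ^ 2) := Real.sqrt_le_sqrt hkey
      _ = vc := by rw [Real.sqrt_sq hvc0]
  rw [div_le_iff₀ ha]
  have : 2 * vc - v_s - v_e = T * a := by rw [hvc]; ring
  linarith
end

section
/- Let a > 0, L > 0, and v_s, v_e > 0 be real numbers with |v_e² − v_s²| ≤ 2aL. Define v_c = sqrt((v_s² + v_e² + 2aL)/2), T = (2·v_c − v_s − v_e)/a, and t_c = (v_c − v_s)/a. Then 0 ≤ t_c ≤ T, and the function v defined by v(t) = v_s + a·t for t ≤ t_c and v(t) = v_c − a·(t − t_c) for t ≥ t_c is Lipschitz with constant a on [0, T], satisfies v(0) = v_s and v(T) = v_e, is nonnegative on [0, T], and satisfies ∫₀ᵀ v(t) dt = L. -/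
/-- Achievability of the minimum travel time: the accelerate-then-decelerate
bang-bang speed profile is admissible and traverses the zone of length `L`
in time `T = (2 v_c − v_s − v_e)/a`. -/
theorem bang_bang_profile_achieves
    (a L v_s v_e : ℝ) (ha : 0 < a) (hL : 0 < L)
    (hvs : 0 < v_s) (hve : 0 < v_e)
    (hfeas : |v_e ^ 2 - v_s ^ 2| ≤ 2 * a * L)
    (v_c T t_c : ℝ)
    (hvc : v_c = Real.sqrt ((v_s ^ 2 + v_e ^ 2 + 2 * a * L) / 2))
    (hT : T = (2 * v_c - v_s - v_e) / a)
    (htc : t_c = (v_c - v_s) / a)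
    (v : ℝ → ℝ)
    (hv : v = fun t => if t ≤ t_c then v_s + a * t else v_c - a * (t - t_c)) :
    0 ≤ t_c ∧ t_c ≤ T ∧
    (∀ s ∈ Set.Icc (0 : ℝ) T, ∀ t ∈ Set.Icc (0 : ℝ) T,
      |v t - v s| ≤ a * |t - s|) ∧
    v 0 = v_s ∧ v T = v_e ∧
    (∀ t ∈ Set.Icc (0 : ℝ) T, 0 ≤ v t) ∧
    ∫ t in (0 : ℝ)..T, v t = L := by
  have ha' : a ≠ 0 := ha.ne'
  have habs := abs_le.mp hfeas
  have harg : (0:ℝ) ≤ (v_s ^ 2 + v_e ^ 2 + 2 * a * L) / 2 := by nlinarith [sq_nonneg v_s, sq_nonneg v_e]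
  have hvc2 : v_c ^ 2 = (v_s ^ 2 + v_e ^ 2 + 2 * a * L) / 2 := by
    rw [hvc, Real.sq_sqrt harg]
  have hvc0 : 0 ≤ v_c := hvc ▸ Real.sqrt_nonneg _
  have hscle : v_s ≤ v_c := by nlinarith
  have hecle : v_e ≤ v_c := by nlinarith
  have hkey1 : a * t_c = v_c - v_s := by rw [htc]; field_simp
  have hkey2 : a * T = 2 * v_c - v_s - v_e := by rw [hT]; field_simp
  have htc0 : 0 ≤ t_c := by rw [htc]; exact div_nonneg (by linarith) ha.le
  have htcT : t_c ≤ T := by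
    have : a * t_c ≤ a * T := by rw [hkey1, hkey2]; linarith
    exact le_of_mul_le_mul_left this ha
  refine ⟨htc0, htcT, ?_, ?_, ?_, ?_, ?_⟩
  · intro s _ t _
    have habs1 : t - s ≤ |t - s| := le_abs_self _
    have habs2 : s - t ≤ |t - s| := by rw [abs_sub_comm]; exact le_abs_self _
    have hm1 : a * (t - s) ≤ a * |t - s| := by nlinarith
    have hm2 : a * (s - t) ≤ a * |t - s| := by nlinarith
    simp only [hv]
    clear hfeas hvc hvc2 habs harg hv hT htc hL hvs hve hvc0 hecle hkey2 ha'
    rcases le_or_gt t t_c with h1 | h1 <;> rcases le_or_gt s t_c with h2 | h2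
    · rw [if_pos h1, if_pos h2, abs_le]; constructor <;> nlinarith
    · rw [if_pos h1, if_neg (not_le.mpr h2), abs_le]; constructor <;> nlinarith
    · rw [if_neg (not_le.mpr h1), if_pos h2, abs_le]; constructor <;> nlinarith
    · rw [if_neg (not_le.mpr h1), if_neg (not_le.mpr h2), abs_le]
      constructor <;> nlinarith
  · simp [hv, htc0]
  · rcases le_or_gt T t_c with h | h
    · have hTtc : T = t_c := le_antisymm h htcT
      simp only [hv, if_pos h]
      have : a * T = a * t_c := by rw [hTtc]
      linarith
    · simp only [hv, if_neg (not_le.mpr h)]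
      have : a * (T - t_c) = v_c - v_e := by rw [mul_sub]; linarith
      linarith
  · intro t ht
    obtain ⟨ht0, htT⟩ := ht
    simp only [hv]
    clear hfeas hvc hvc2 habs harg hv hT htc hL
    rcases le_or_gt t t_c with h | h
    · rw [if_pos h]; nlinarith
    · rw [if_neg (not_le.mpr h)]
      have h2 : a * (t - t_c) ≤ a * (T - t_c) := by nlinarith
      have : a * (T - t_c) = v_c - v_e := by rw [mul_sub]; linarith
      linarith
  · -- the integral
    have hvmin : v = fun t => min (v_s + a * t) (v_c - a * (t - t_c)) := by
      clear hfeas hvc hvc2 habs harg hT htc hL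
      funext t
      rcases le_or_gt t t_c with h | h
      · simp only [hv, if_pos h]
        refine (min_eq_left ?_).symm
        nlinarith [mul_le_mul_of_nonneg_left (sub_nonneg.mpr h) ha.le]
      · simp only [hv, if_neg (not_le.mpr h)]
        refine (min_eq_right ?_).symm
        nlinarith [mul_le_mul_of_nonneg_left (sub_nonneg.mpr h.le) ha.le]
    have hcont : Continuous v := by
      rw [hvmin]
      exact ((continuous_const.add (continuous_const.mul continuous_id)).min
        (continuous_const.sub (continuous_const.mul (continuous_id.sub continuous_const))))
    have hint1 : IntervalIntegrable v MeasureTheory.volume 0 t_c := hcont.intervalIntegrable _ _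
    have hint2 : IntervalIntegrable v MeasureTheory.volume t_c T := hcont.intervalIntegrable _ _
    rw [← intervalIntegral.integral_add_adjacent_intervals hint1 hint2]
    have hI1 : ∫ t in (0:ℝ)..t_c, v t = v_s * t_c + a * t_c ^ 2 / 2 := by
      have heq : ∫ t in (0:ℝ)..t_c, v t = ∫ t in (0:ℝ)..t_c, (v_s + a * t) := by
        apply intervalIntegral.integral_congr
        intro t htmem
        rw [Set.uIcc_of_le htc0] at htmem
        simp only [hv, if_pos htmem.2]
      rw [heq, intervalIntegral.integral_add intervalIntegrable_const
        ((by fun_prop : Continuous fun t : ℝ => a * t).intervalIntegrable _ _),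
        intervalIntegral.integral_const, intervalIntegral.integral_const_mul,
        integral_id]
      simp only [smul_eq_mul]
      ring
    have hI2 : ∫ t in t_c..T, v t = (v_c + a * t_c) * (T - t_c) - a * (T ^ 2 - t_c ^ 2) / 2 := by
      have heq : ∫ t in t_c..T, v t = ∫ t in t_c..T, ((v_c + a * t_c) - a * t) := by
        apply intervalIntegral.integral_congr
        intro t htmem
        rw [Set.uIcc_of_le htcT] at htmem
        rcases le_or_gt t t_c with h | h
        · have ht' : t = t_c := le_antisymm h htmem.1
          subst ht'
          simp only [hv, if_pos le_rfl]
          linarith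
        · simp only [hv, if_neg (not_le.mpr h)]
          ring
      rw [heq, intervalIntegral.integral_sub intervalIntegrable_const
        ((by fun_prop : Continuous fun t : ℝ => a * t).intervalIntegrable _ _),
        intervalIntegral.integral_const, intervalIntegral.integral_const_mul,
        integral_id]
      simp only [smul_eq_mul]
      ring
    rw [hI1, hI2]
    have key : 2 * v_c ^ 2 - v_s ^ 2 - v_e ^ 2 = 2 * a * L := by linarith
    apply mul_left_cancel₀ ha'
    linear_combination (v_c - v_e) * hkey1 + (a * t_c - a * T / 2 + (v_s + v_e) / 2) * hkey2 + key / 2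
end

section
/- Let t0 < t1 be real numbers and let p : ℝ → ℝ be a polynomial function of degree at most 3. Then for every function q : ℝ → ℝ that is twice continuously differentiable on [t0, t1] and satisfies q(t0) = p(t0), q'(t0) = p'(t0), q(t1) = p(t1), and q'(t1) = p'(t1), one has ∫_{t0}^{t1} p''(t)² dt ≤ ∫_{t0}^{t1} q''(t)² dt. -/
/-- The cubic trajectory minimizes the energy ∫ u² among all twice continuously
differentiable trajectories with the same boundary position and speed. -/
theorem cubic_minimizes_energy
    (t0 t1 : ℝ) (h01 : t0 < t1)
    (P : Polynomial ℝ) (hP : P.degree ≤ 3)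
    (q q' q'' : ℝ → ℝ)
    (hq : ∀ t ∈ Set.Icc t0 t1, HasDerivAt q (q' t) t)
    (hq' : ∀ t ∈ Set.Icc t0 t1, HasDerivAt q' (q'' t) t)
    (hq'' : ContinuousOn q'' (Set.Icc t0 t1))
    (h0 : q t0 = P.eval t0)
    (h0' : q' t0 = (Polynomial.derivative P).eval t0)
    (h1 : q t1 = P.eval t1)
    (h1' : q' t1 = (Polynomial.derivative P).eval t1) :
    ∫ t in t0..t1, ((Polynomial.derivative (Polynomial.derivative P)).eval t) ^ 2 ≤
      ∫ t in t0..t1, (q'' t) ^ 2 := by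
  have hle : t0 ≤ t1 := h01.le
  have huIcc : Set.uIcc t0 t1 = Set.Icc t0 t1 := Set.uIcc_of_le hle
  set P' := Polynomial.derivative P with hP'def
  set P'' := Polynomial.derivative P' with hP''def
  set P''' := Polynomial.derivative P'' with hP'''def
  -- P''' is constant
  have hnd : P.natDegree ≤ 3 := Polynomial.natDegree_le_iff_degree_le.mpr hP
  have hnd1 : P'.natDegree ≤ 2 :=
    (Polynomial.natDegree_derivative_le P).trans (by omega)
  have hnd2 : P''.natDegree ≤ 1 :=
    (Polynomial.natDegree_derivative_le P').trans (by omega)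
  have hnd3 : P'''.natDegree ≤ 0 :=
    (Polynomial.natDegree_derivative_le P'').trans (by omega)
  obtain ⟨c, hc⟩ : ∃ c, P''' = Polynomial.C c :=
    ⟨P'''.coeff 0, Polynomial.eq_C_of_natDegree_le_zero hnd3⟩
  -- derivative facts for r = q - p
  have hr : ∀ t ∈ Set.Icc t0 t1,
      HasDerivAt (fun t => q t - P.eval t) (q' t - P'.eval t) t := by
    intro t ht
    exact (hq t ht).sub (P.hasDerivAt t)
  have hr' : ∀ t ∈ Set.Icc t0 t1,
      HasDerivAt (fun t => q' t - P'.eval t) (q'' t - P''.eval t) t := by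
    intro t ht
    exact (hq' t ht).sub (P'.hasDerivAt t)
  -- continuity / integrability
  have hcontq' : ContinuousOn q' (Set.Icc t0 t1) :=
    fun t ht => (hq' t ht).continuousAt.continuousWithinAt
  have hcontr' : ContinuousOn (fun t => q' t - P'.eval t) (Set.Icc t0 t1) :=
    hcontq'.sub (Polynomial.continuous P').continuousOn
  have hcontr'' : ContinuousOn (fun t => q'' t - P''.eval t) (Set.Icc t0 t1) :=
    hq''.sub (Polynomial.continuous P'').continuousOn
  have hint_r' : IntervalIntegrable (fun t => q' t - P'.eval t) MeasureTheory.volume t0 t1 :=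
    hcontr'.intervalIntegrable_of_Icc hle
  have hint_r'' : IntervalIntegrable (fun t => q'' t - P''.eval t) MeasureTheory.volume t0 t1 :=
    hcontr''.intervalIntegrable_of_Icc hle
  have hint_P''' : IntervalIntegrable (fun t => P'''.eval t) MeasureTheory.volume t0 t1 :=
    (Polynomial.continuous P''').intervalIntegrable t0 t1
  -- boundary values of r and r'
  have hr0 : q t0 - P.eval t0 = 0 := by rw [h0]; ring
  have hr1 : q t1 - P.eval t1 = 0 := by rw [h1]; ring
  have hr'0 : q' t0 - P'.eval t0 = 0 := by rw [h0']; ring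
  have hr'1 : q' t1 - P'.eval t1 = 0 := by rw [h1']; ring
  -- ∫ r' = r(t1) - r(t0) = 0
  have hintr'_eq : ∫ t in t0..t1, (q' t - P'.eval t) = 0 := by
    have := intervalIntegral.integral_eq_sub_of_hasDerivAt
      (f := fun t => q t - P.eval t) (f' := fun t => q' t - P'.eval t)
      (fun t ht => hr t (huIcc ▸ ht)) hint_r'
    rw [this]; rw [hr0, hr1]; ring
  -- ∫ P''' * r' = c * ∫ r' = 0
  have hint2 : ∫ t in t0..t1, P'''.eval t * (q' t - P'.eval t) = 0 := by
    have heq : (fun t => P'''.eval t * (q' t - P'.eval t))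
        = fun t => c * (q' t - P'.eval t) := by
      funext t; rw [hc]; simp
    rw [heq, intervalIntegral.integral_const_mul, hintr'_eq, mul_zero]
  -- integration by parts: ∫ P'' * r'' = 0
  have horth : ∫ t in t0..t1, P''.eval t * (q'' t - P''.eval t) = 0 := by
    have hibp := intervalIntegral.integral_mul_deriv_eq_deriv_mul
      (u := fun t => P''.eval t) (u' := fun t => P'''.eval t)
      (v := fun t => q' t - P'.eval t) (v' := fun t => q'' t - P''.eval t)
      (fun t _ => P''.hasDerivAt t)
      (fun t ht => hr' t (huIcc ▸ ht)) hint_P''' hint_r''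
    rw [hibp]; rw [hr'0, hr'1, hint2]; ring
  -- integrability of the squared pieces
  have hint_P''sq : IntervalIntegrable (fun t => (P''.eval t) ^ 2)
      MeasureTheory.volume t0 t1 :=
    ((Polynomial.continuous P'').pow 2).intervalIntegrable t0 t1
  have hint_cross : IntervalIntegrable (fun t => 2 * (P''.eval t * (q'' t - P''.eval t)))
      MeasureTheory.volume t0 t1 := by
    exact (continuousOn_const.mul
      ((Polynomial.continuous P'').continuousOn.mul hcontr'')).intervalIntegrable_of_Icc hle
  have hint_r''sq : IntervalIntegrable (fun t => (q'' t - P''.eval t) ^ 2)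
      MeasureTheory.volume t0 t1 := by
    exact (hcontr''.pow 2).intervalIntegrable_of_Icc hle
  -- expand the square
  have hexp : (fun t => (q'' t) ^ 2)
      = fun t => (P''.eval t) ^ 2 +
          (2 * (P''.eval t * (q'' t - P''.eval t)) + (q'' t - P''.eval t) ^ 2) := by
    funext t; ring
  have hsq_nonneg : 0 ≤ ∫ t in t0..t1, (q'' t - P''.eval t) ^ 2 :=
    intervalIntegral.integral_nonneg hle (fun t _ => sq_nonneg _)
  calc ∫ t in t0..t1, (P''.eval t) ^ 2
      ≤ (∫ t in t0..t1, (P''.eval t) ^ 2) + ∫ t in t0..t1, (q'' t - P''.eval t) ^ 2 := by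
        linarith
    _ = ∫ t in t0..t1, (q'' t) ^ 2 := by
        rw [hexp, intervalIntegral.integral_add hint_P''sq (hint_cross.add hint_r''sq),
          intervalIntegral.integral_add hint_cross hint_r''sq,
          intervalIntegral.integral_const_mul, horth]
        ring
end
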